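/- Language equivalence implies bisimilarity after pruning: if two states x, y of a skip-free automaton (X, h) accept the same language, then x and y are bisimilar in the pruned automaton (X, ⌊h⌋), where ⌊h⌋ redirects every transition into a dead state to ⊥. -/
import Mathlib


variable {At : Type} {Act : Type} {X : Type} {Y : Type} {Z : Type}

/-- A skip-free automaton structure on `X`. -/
abbrev SFA (At Act X : Type) := X → At → Option (Act × Option X)

/-- Acceptance of a guarded trace (a nonempty list of atom/action pairs) from a state. -/
inductive Accepts (h : SFA At Act X) : X → List (At × Act) → Prop
  | last {x α p} : h x α = some (p, none) → Accepts h x [(α, p)]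
  | step {x α p x' w} : h x α = some (p, some x') → Accepts h x' w →
      Accepts h x ((α, p) :: w)

/-- The language of guarded traces accepted by a state of a skip-free automaton. -/
def Lang (h : SFA At Act X) (x : X) : Set (List (At × Act)) := {w | Accepts h x w}

/-- Bisimulations between skip-free automata. -/
def IsSFBisim (h : SFA At Act X) (k : SFA At Act Y) (R : X → Y → Prop) : Prop :=
  ∀ ⦃x y⦄, R x y → ∀ α : At,
    (h x α = none ↔ k y α = none) ∧
    (∀ p : Act, h x α = some (p, none) ↔ k y α = some (p, none)) ∧
    (∀ (p : Act) (x' : X), h x α = some (p, some x') →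
      ∃ y' : Y, k y α = some (p, some y') ∧ R x' y')

/-- Bisimilarity of states of skip-free automata. -/
def SFBisimilar (h : SFA At Act X) (k : SFA At Act Y) (x : X) (y : Y) : Prop :=
  ∃ R, IsSFBisim h k R ∧ R x y

/-- A state of a skip-free automaton is dead if it belongs to some set of states closed
under transitions and containing no accepting transitions (the largest such set). -/
def Dead (h : SFA At Act X) (x : X) : Prop :=
  ∃ D : Set X, x ∈ D ∧ ∀ y ∈ D, ∀ α : At,
    h y α = none ∨ ∃ (p : Act) (y' : X), h y α = some (p, some y') ∧ y' ∈ D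

open scoped Classical in
/-- Pruning of a skip-free automaton: transitions into dead states are redirected to ⊥. -/
noncomputable def prune (h : SFA At Act X) : SFA At Act X :=
  fun x α =>
    match h x α with
    | some (p, some x') => if Dead h x' then none else some (p, some x')
    | o => o

section Aux
variable {At Act X : Type} (h : SFA At Act X)

lemma accepts_ne_nil {a : X} {w} (ha : Accepts h a w) : w ≠ [] := by
  cases ha <;> simp

lemma dead_lang_empty {z : X} (hd : Dead h z) : Lang h z = ∅ := by
  obtain ⟨D, hz, hD⟩ := hd
  have key : ∀ {a : X} {w}, Accepts h a w → a ∉ D := by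
    intro a w ha
    induction ha with
    | last hx =>
        intro hm
        rcases hD _ hm _ with h0 | ⟨p, y', h1, _⟩
        · rw [hx] at h0; cases h0
        · rw [hx] at h1
          cases h1
    | step hx _ ih =>
        intro hm
        rcases hD _ hm _ with h0 | ⟨p, y', h1, hy'⟩
        · rw [hx] at h0; cases h0
        · rw [hx] at h1
          injection h1 with h2
          injection h2 with _ h3
          injection h3 with h4
          subst h4
          exact ih hy'
  ext w
  simp only [Set.mem_empty_iff_false, iff_false, Lang, Set.mem_setOf_eq]
  exact fun ha => key ha hz

lemma dead_of_lang_empty {z : X} (hl : Lang h z = ∅) : Dead h z := by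
  refine ⟨{w | Lang h w = ∅}, hl, ?_⟩
  intro a ha α
  match e : h a α with
  | none => exact Or.inl rfl
  | some (p, none) =>
      exfalso
      have hacc : Accepts h a [(α, p)] := .last e
      have := Set.eq_empty_iff_forall_notMem.mp ha [(α, p)]
      exact this hacc
  | some (p, some a') =>
      refine Or.inr ⟨p, a', rfl, ?_⟩
      simp only [Set.mem_setOf_eq, Set.eq_empty_iff_forall_notMem]
      intro w hw
      have : Accepts h a ((α, p) :: w) := .step e hw
      exact Set.eq_empty_iff_forall_notMem.mp ha _ this

lemma not_dead_iff {z : X} : ¬ Dead h z ↔ ∃ w, Accepts h z w := by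
  constructor
  · intro hd
    by_contra hw
    push_neg at hw
    exact hd (dead_of_lang_empty h (Set.eq_empty_iff_forall_notMem.mpr hw))
  · rintro ⟨w, hw⟩ hd
    exact Set.eq_empty_iff_forall_notMem.mp (dead_lang_empty h hd) w hw

lemma lang_deriv {a : X} {α p a'} (e : h a α = some (p, some a')) (w) :
    Accepts h a' w ↔ Accepts h a ((α, p) :: w) := by
  constructor
  · exact fun hw => .step e hw
  · intro hw
    cases hw with
    | last h1 => rw [e] at h1; injection h1 with h2; injection h2 with _ h3; cases h3
    | step h1 hw' =>
        rw [e] at h1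
        injection h1 with h2
        injection h2 with hp h3
        injection h3 with h4
        subst h4
        exact hw'

lemma prune_none_iff (a : X) (α) :
    prune h a α = none ↔ ∀ p w, ¬ Accepts h a ((α, p) :: w) := by
  unfold prune
  match e : h a α with
  | none =>
      simp only [e]
      constructor
      · intro _ p w ha
        cases ha with
        | last h1 => rw [e] at h1; cases h1
        | step h1 _ => rw [e] at h1; cases h1
      · intro _; trivial
  | some (p, none) =>
      simp only [e]
      constructor
      · intro h0; cases h0
      · intro H; exact absurd (Accepts.last e) (H p [])
  | some (p, some a') =>
      simp only [e]
      split_ifs with hd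
      · constructor
        · intro _ q w ha
          cases ha with
          | last h1 =>
              rw [e] at h1; injection h1 with h2; injection h2 with _ h3; cases h3
          | step h1 hw =>
              rw [e] at h1
              injection h1 with h2
              injection h2 with _ h3
              injection h3 with h4
              subst h4
              exact Set.eq_empty_iff_forall_notMem.mp (dead_lang_empty h hd) _ hw
        · intro _; rfl
      · constructor
        · intro h0; cases h0
        · intro H
          exfalso
          obtain ⟨w, hw⟩ := (not_dead_iff h).mp hd
          exact H p w (.step e hw)

lemma prune_last_iff (a : X) (α p) :
    prune h a α = some (p, none) ↔ Accepts h a [(α, p)] := by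
  unfold prune
  match e : h a α with
  | none =>
      simp only [e]
      constructor
      · intro h0; cases h0
      · intro ha
        cases ha with
        | last h1 => rw [e] at h1; cases h1
        | step h1 _ => rw [e] at h1; cases h1
  | some (q, none) =>
      simp only [e]
      constructor
      · intro h0
        injection h0 with h2
        injection h2 with hq _
        subst hq
        exact .last e
      · intro ha
        cases ha with
        | last h1 => rw [e] at h1; exact h1
        | step h1 hw => exact absurd rfl (accepts_ne_nil h hw)
  | some (q, some a') =>
      simp only [e]
      split_ifs with hd
      · constructor
        · intro h0; cases h0
        · intro ha
          cases ha with
          | last h1 =>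
              rw [e] at h1; injection h1 with h2; injection h2 with _ h3; cases h3
          | step h1 hw => exact absurd rfl (accepts_ne_nil h hw)
      · constructor
        · intro h0
          injection h0 with h2
          injection h2 with _ h3
          cases h3
        · intro ha
          cases ha with
          | last h1 =>
              rw [e] at h1; injection h1 with h2; injection h2 with _ h3; cases h3
          | step h1 hw => exact absurd rfl (accepts_ne_nil h hw)

lemma prune_some_iff (a : X) (α p a') :
    prune h a α = some (p, some a') ↔ h a α = some (p, some a') ∧ ¬ Dead h a' := by
  unfold prune
  match e : h a α with
  | none =>
      simp only [e]
      constructor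
      · intro h0; cases h0
      · rintro ⟨h0, _⟩; cases h0
  | some (q, none) =>
      simp only [e]
      constructor
      · intro h0
        injection h0 with h2
        injection h2 with _ h3
        cases h3
      · rintro ⟨h0, _⟩
        injection h0 with h2
        injection h2 with _ h3
        cases h3
  | some (q, some b') =>
      simp only [e]
      split_ifs with hd
      · constructor
        · intro h0; cases h0
        · rintro ⟨h0, hnd⟩
          injection h0 with h2
          injection h2 with _ h3
          injection h3 with h4
          subst h4
          exact absurd hd hnd
      · constructor
        · intro h0
          injection h0 with h2
          injection h2 with hq h3
          injection h3 with h4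
          subst hq; subst h4
          exact ⟨rfl, hd⟩
        · rintro ⟨h0, _⟩
          exact h0

end Aux

/-- language-equivalent states of a skip-free automaton are bisimilar in
its pruning. -/
theorem lang_eq_implies_bisim_pruned (h : SFA At Act X) (x y : X)
    (hl : Lang h x = Lang h y) :
    SFBisimilar (prune h) (prune h) x y := by
  refine ⟨fun a b => Lang h a = Lang h b, ?_, hl⟩
  intro a b hab α
  have hacc : ∀ w, Accepts h a w ↔ Accepts h b w := fun w => Set.ext_iff.mp hab w
  refine ⟨?_, ?_, ?_⟩
  · rw [prune_none_iff, prune_none_iff]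
    constructor
    · intro H p w hb; exact H p w ((hacc _).mpr hb)
    · intro H p w ha; exact H p w ((hacc _).mp ha)
  · intro p
    rw [prune_last_iff, prune_last_iff, hacc]
  · intro p a' hpa
    obtain ⟨e, hnd⟩ := (prune_some_iff h a α p a').mp hpa
    obtain ⟨w, hw⟩ := (not_dead_iff h).mp hnd
    have hb : Accepts h b ((α, p) :: w) := (hacc _).mp ((lang_deriv h e w).mp hw)
    cases hb with
    | last h1 => exact absurd rfl (accepts_ne_nil h hw)
    | @step _ _ _ b' _ h1 hw' =>
        refine ⟨b', (prune_some_iff h b α p b').mpr ⟨h1, ?_⟩, ?_⟩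
        · exact (not_dead_iff h).mpr ⟨w, hw'⟩
        · ext v
          simp only [Lang, Set.mem_setOf_eq]
          rw [lang_deriv h e v, lang_deriv h h1 v, hacc]
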